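/- arXiv:0906.5510 — 3 statements merged into one kernel-verified Lean document; each statement's English description precedes it below -/
import Mathlib

section
/- Let ℤ_{p^n} be the ring of integers of the unramified degree-n extension of ℚ_p and σ its Frobenius automorphism. For α, β, γ ∈ ℤ_{p^n} with α a unit and β ≡ 0 mod p, the equation α·σ(X) + β·X + γ = 0 has a unique solution X in ℤ_{p^n}. -/
/-!
Since the Frobenius `σ` is bijective and `α` is a unit, `X` solves the equation exactly when it is
a fixed point of `T X = σ⁻¹(-α⁻¹ (β X + γ))`. As `p ∣ β`, the map `T` turns a congruence modulo
`p ^ n` into one modulo `p ^ (n + 1)`, so in the `p`-adically complete ring `𝕎 k` the iterates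
`T^[n] 0` converge to a fixed point, and any two fixed points agree modulo every power of `p`.
-/

open Function

section AdicContraction

variable {R M : Type*} [CommRing R] [AddCommGroup M] [Module R M]

def IsAdicContracting (I : Ideal R) (T : M → M) : Prop :=
  ∀ ⦃x y : M⦄ ⦃n : ℕ⦄, x ≡ y [SMOD (I ^ n • ⊤ : Submodule R M)] →
    T x ≡ T y [SMOD (I ^ (n + 1) • ⊤ : Submodule R M)]

namespace IsAdicContracting

variable {I : Ideal R} {T : M → M}

theorem iterate_smodEq (hT : IsAdicContracting I T) (x y : M) (k : ℕ) :
    T^[k] x ≡ T^[k] y [SMOD (I ^ k • ⊤ : Submodule R M)] := by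
  induction k with
  | zero => simp [SModEq.top]
  | succ k ih => simpa only [iterate_succ_apply'] using hT ih

theorem eq_of_isFixedPt [IsHausdorff I M] (hT : IsAdicContracting I T) {x y : M}
    (hx : IsFixedPt T x) (hy : IsFixedPt T y) : x = y := by
  refine (IsHausdorff.eq_iff_smodEq (I := I)).2 fun k => ?_
  simpa only [(hx.iterate k).eq, (hy.iterate k).eq] using hT.iterate_smodEq x y k

theorem exists_isFixedPt [IsAdicComplete I M] (hT : IsAdicContracting I T) :
    ∃ x, IsFixedPt T x := by
  set a : ℕ → M := fun k => T^[k] 0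
  have ha_cauchy : ∀ {m n}, m ≤ n → a m ≡ a n [SMOD (I ^ m • ⊤ : Submodule R M)] := by
    intro m n hmn
    obtain ⟨j, rfl⟩ := Nat.exists_eq_add_of_le hmn
    simpa only [a, iterate_add_apply] using hT.iterate_smodEq 0 (T^[j] 0) m
  obtain ⟨L, hL⟩ := IsPrecomplete.prec inferInstance ha_cauchy
  refine ⟨L, (IsHausdorff.eq_iff_smodEq (I := I)).2 fun n => ?_⟩
  have hTL : T L ≡ a (n + 1) [SMOD (I ^ (n + 1) • ⊤ : Submodule R M)] := by
    simpa only [a, iterate_succ_apply'] using hT (hL n).symm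
  exact (hTL.trans (hL (n + 1))).mono
    (Submodule.smul_mono_left (Ideal.pow_le_pow_right n.le_succ))

theorem existsUnique_isFixedPt [IsAdicComplete I M] (hT : IsAdicContracting I T) :
    ∃! x, IsFixedPt T x :=
  let ⟨x, hx⟩ := hT.exists_isFixedPt
  ⟨x, hx, fun _ hy => hT.eq_of_isFixedPt hy hx⟩

end IsAdicContracting

end AdicContraction

theorem smodEq_span_singleton_pow_iff {R : Type*} [CommRing R] {π x y : R} {n : ℕ} :
    x ≡ y [SMOD (Ideal.span {π} ^ n • ⊤ : Submodule R R)] ↔ π ^ n ∣ x - y := by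
  simp [SModEq.sub_mem, Ideal.span_singleton_pow, Ideal.mem_span_singleton]

namespace WittVector

variable {p : ℕ} [Fact p.Prime] {k : Type*} [CommRing k] [CharP k p] [PerfectRing k p]

local notation "𝕎" => WittVector p

noncomputable def frobeniusEquationMap (u : (𝕎 k)ˣ) (β γ : 𝕎 k) (X : 𝕎 k) : 𝕎 k :=
  (frobeniusEquiv p k).symm (-(↑u⁻¹ * (β * X + γ)))

theorem isFixedPt_frobeniusEquationMap_iff (u : (𝕎 k)ˣ) (β γ X : 𝕎 k) :
    IsFixedPt (frobeniusEquationMap u β γ) X ↔ ↑u * frobenius X + β * X + γ = 0 := by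
  rw [IsFixedPt, frobeniusEquationMap, RingEquiv.symm_apply_eq, frobeniusEquiv_apply]
  constructor <;> intro h
  · linear_combination -(u : 𝕎 k) * h - (β * X + γ) * u.mul_inv
  · linear_combination -(↑u⁻¹ : 𝕎 k) * h + frobenius X * u.inv_mul

theorem isAdicContracting_frobeniusEquationMap (u : (𝕎 k)ˣ) {β : 𝕎 k} (hβ : (p : 𝕎 k) ∣ β)
    (γ : 𝕎 k) : IsAdicContracting (Ideal.span {(p : 𝕎 k)}) (frobeniusEquationMap u β γ) := by
  intro X Y n hXY
  rw [smodEq_span_singleton_pow_iff] at hXY ⊢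
  have hdvd : (p : 𝕎 k) ^ (n + 1) ∣ -(↑u⁻¹ * (β * X + γ)) - -(↑u⁻¹ * (β * Y + γ)) := by
    have : -(↑u⁻¹ * (β * X + γ)) - -(↑u⁻¹ * (β * Y + γ)) = -(↑u⁻¹ * (β * (X - Y))) := by ring
    rw [this, pow_succ']
    exact (Dvd.dvd.mul_left (mul_dvd_mul hβ hXY) _).neg_right
  simpa only [frobeniusEquationMap, map_sub, map_pow, map_natCast] using
    map_dvd (frobeniusEquiv p k).symm hdvd

end WittVector

theorem stmt_3_general (p n : ℕ) [Fact p.Prime]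
    (α β γ : WittVector p (GaloisField p n))
    (hα : IsUnit α) (hβ : (p : WittVector p (GaloisField p n)) ∣ β) :
    ∃! X : WittVector p (GaloisField p n),
      α * WittVector.frobenius X + β * X + γ = 0 := by
  obtain ⟨u, rfl⟩ := hα
  simpa only [WittVector.isFixedPt_frobeniusEquationMap_iff] using
    (WittVector.isAdicContracting_frobeniusEquationMap u hβ γ).existsUnique_isFixedPt

theorem stmt_3 (p n : ℕ) [Fact p.Prime] (hn : 0 < n)
    (α β γ : WittVector p (GaloisField p n))
    (hα : IsUnit α) (hβ : (p : WittVector p (GaloisField p n)) ∣ β) :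
    ∃! X : WittVector p (GaloisField p n),
      α * WittVector.frobenius X + β * X + γ = 0 :=
  stmt_3_general p n α β γ hα hβ
end

section
/- Generalized Newton lift with Frobenius: let ℤ_{p^n} be the unramified extension of ℤ_p with Frobenius σ, and φ(Y,Z) a polynomial in two variables over ℤ_{p^n}. Suppose x₀ ∈ ℤ_{p^n} satisfies φ(x₀, σ(x₀)) ≡ 0 mod p^{2k+1}, where k is the p-adic valuation of (∂φ/∂Z)(x₀, σ(x₀)), and suppose (∂φ/∂Y)(x₀, σ(x₀)) ≡ 0 mod p^{k+1}. Then for every N there exists X ∈ ℤ_{p^n} with φ(X, σ(X)) ≡ 0 mod p^{N+k} and X ≡ x₀ mod p^{k+1}. -/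
/-! Write `∂_Z φ(x₀, σ x₀) = π ^ k * e` with `e` a unit. Replacing `X` by `X + π ^ (M + k + 1) * u`
changes `φ(X, σ X)` modulo `π ^ (M + 2k + 2)` only by `π ^ (M + 2k + 1) * σ(u) * e`: the `∂_Y` term
is killed by `π ^ (k + 1) ∣ ∂_Y φ` and the quadratic Taylor terms by `π ^ (2 (M + k + 1))`.
As `σ` is surjective, `σ(u) = -c e⁻¹` cancels an error `π ^ (M + 2k + 1) * c`. Moving `X` by
multiples of `π ^ (k + 1)` preserves both derivative conditions, so the step can be iterated. -/

open MvPolynomial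

namespace MvPolynomial

variable {R σ : Type*} [CommRing R]

theorem dvd_eval_sub_eval (φ : MvPolynomial σ R) {c : R} {x y : σ → R}
    (h : ∀ i, c ∣ x i - y i) : c ∣ eval x φ - eval y φ := by
  induction φ using MvPolynomial.induction_on with
  | C r => simp
  | add q r hq hr => simpa only [map_add, add_sub_add_comm] using dvd_add hq hr
  | mul_X q i hq =>
    have hsplit : eval x (q * X i) - eval y (q * X i) =
        (eval x q - eval y q) * x i + eval y q * (x i - y i) := by
      simp only [map_mul, eval_X]; ring
    rw [hsplit]
    exact dvd_add (hq.mul_right _) ((h i).mul_left _)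

theorem sq_dvd_eval_add_sub_linear [Fintype σ] (φ : MvPolynomial σ R) {c : R} (x h : σ → R)
    (hc : ∀ i, c ∣ h i) :
    c ^ 2 ∣ eval (x + h) φ - eval x φ - ∑ i, h i * eval x (pderiv i φ) := by
  classical
  induction φ using MvPolynomial.induction_on with
  | C r => simp
  | add q r hq hr =>
    convert dvd_add hq hr using 1
    simp only [map_add, mul_add, Finset.sum_add_distrib]; ring
  | mul_X q j hq =>
    have hderiv : ∑ i, h i * eval x (pderiv i (q * X j)) =
        (∑ i, h i * eval x (pderiv i q)) * x j + h j * eval x q := by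
      simp only [Derivation.leibniz, pderiv_X, smul_eq_mul, map_add, map_mul, eval_X, mul_add,
        Finset.sum_add_distrib, Pi.single_apply, mul_ite, mul_one, mul_zero, apply_ite (eval x),
        map_zero, Finset.sum_ite_eq, Finset.mem_univ, if_true, mul_left_comm (h _) (x j),
        ← Finset.mul_sum]
      ring
    have hsplit : eval (x + h) (q * X j) - eval x (q * X j) -
          ∑ i, h i * eval x (pderiv i (q * X j)) =
        (eval (x + h) q - eval x q - ∑ i, h i * eval x (pderiv i q)) * x j +
          (eval (x + h) q - eval x q) * h j := by
      rw [hderiv]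
      simp only [map_mul, eval_X, Pi.add_apply]
      ring
    rw [sq] at hq
    rw [hsplit, sq]
    exact dvd_add (hq.mul_right _)
      (mul_dvd_mul (dvd_eval_sub_eval q fun i => by simpa using hc i) (hc j))

end MvPolynomial

section TwistedNewton

variable {R : Type*} [CommRing R] {σ : R →+* R} {π : R}

theorem dvd_eval_graph_sub_eval_graph (hπ : σ π = π) (ψ : MvPolynomial (Fin 2) R) {m : ℕ}
    {x y : R} (h : π ^ m ∣ x - y) : π ^ m ∣ eval ![x, σ x] ψ - eval ![y, σ y] ψ := by
  obtain ⟨t, ht⟩ := h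
  have hσ : π ^ m ∣ σ x - σ y := ⟨σ t, by rw [← map_sub, ht, map_mul, map_pow, hπ]⟩
  exact dvd_eval_sub_eval ψ <| Fin.forall_fin_two.2 ⟨⟨t, ht⟩, hσ⟩

variable {φ : MvPolynomial (Fin 2) R} {x₀ : R} {k : ℕ}

theorem exists_twisted_root_approx_succ (hσ : Function.Surjective σ) (hπ : σ π = π) (e : Rˣ)
    (hZ : eval ![x₀, σ x₀] (pderiv 1 φ) = π ^ k * e)
    (hY : π ^ (k + 1) ∣ eval ![x₀, σ x₀] (pderiv 0 φ))
    {M : ℕ} {X : R} (hX : π ^ (k + 1) ∣ X - x₀) (hφ : π ^ (M + 2 * k + 1) ∣ eval ![X, σ X] φ) :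
    ∃ X' : R, π ^ (k + 1) ∣ X' - x₀ ∧ π ^ (M + 1 + 2 * k + 1) ∣ eval ![X', σ X'] φ := by
  obtain ⟨c, hc⟩ := hφ
  obtain ⟨u, hu⟩ := hσ (-c * ↑e⁻¹)
  have hue : σ u * e = -c := by rw [hu, mul_assoc, Units.inv_mul, mul_one]
  obtain ⟨s, hs⟩ : π ^ (k + 1) ∣ eval ![X, σ X] (pderiv 0 φ) := by
    simpa using dvd_add (dvd_eval_graph_sub_eval_graph hπ (pderiv 0 φ) hX) hY
  obtain ⟨t, ht⟩ : π ^ (k + 1) ∣ eval ![X, σ X] (pderiv 1 φ) - π ^ k * e :=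
    hZ ▸ dvd_eval_graph_sub_eval_graph hπ (pderiv 1 φ) hX
  set m := M + k + 1
  have hgraph : ![X + π ^ m * u, σ (X + π ^ m * u)] = ![X, σ X] + ![π ^ m * u, π ^ m * σ u] := by
    simp [hπ]
  obtain ⟨r, hr⟩ := sq_dvd_eval_add_sub_linear φ ![X, σ X] ![π ^ m * u, π ^ m * σ u]
    (c := π ^ m) (Fin.forall_fin_two.2 ⟨dvd_mul_right _ _, dvd_mul_right _ _⟩)
  rw [← hgraph, Fin.sum_univ_two] at hr
  simp only [Matrix.cons_val_zero, Matrix.cons_val_one] at hr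
  refine ⟨X + π ^ m * u, ?_, π ^ M * r + u * s + σ u * t, ?_⟩
  · rw [add_sub_right_comm]
    exact dvd_add hX ((pow_dvd_pow π (by omega)).mul_right u)
  · linear_combination hr + hc + π ^ m * u * hs + π ^ m * σ u * ht + π ^ (m + k) * hue

theorem exists_twisted_root_approx (hσ : Function.Surjective σ) (hπ : σ π = π) (e : Rˣ)
    (hZ : eval ![x₀, σ x₀] (pderiv 1 φ) = π ^ k * e)
    (hY : π ^ (k + 1) ∣ eval ![x₀, σ x₀] (pderiv 0 φ))
    (h0 : π ^ (2 * k + 1) ∣ eval ![x₀, σ x₀] φ) (M : ℕ) :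
    ∃ X : R, π ^ (k + 1) ∣ X - x₀ ∧ π ^ (M + 2 * k + 1) ∣ eval ![X, σ X] φ := by
  induction M with
  | zero => exact ⟨x₀, by simp, by simpa using h0⟩
  | succ M ih =>
    obtain ⟨X, hX, hφ⟩ := ih
    exact exists_twisted_root_approx_succ hσ hπ e hZ hY hX hφ

end TwistedNewton

namespace WittVector

variable {p : ℕ} [Fact p.Prime] {K : Type*} [Field K] [CharP K p] [PerfectRing K p]

theorem isUnit_of_not_p_dvd {x : WittVector p K} (hx : ¬ (p : WittVector p K) ∣ x) : IsUnit x :=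
  isUnit_of_coeff_zero_ne_zero x fun h =>
    hx (Ideal.mem_span_singleton.mp ((mem_span_p_iff_coeff_zero_eq_zero x).mpr h))

theorem exists_eq_p_pow_mul_unit {x : WittVector p K} {k : ℕ} (hk : (p : WittVector p K) ^ k ∣ x)
    (hk' : ¬ (p : WittVector p K) ^ (k + 1) ∣ x) : ∃ e : (WittVector p K)ˣ, x = p ^ k * e := by
  obtain ⟨e, rfl⟩ := hk
  have he : ¬ (p : WittVector p K) ∣ e := fun ⟨t, ht⟩ =>
    hk' ⟨t, by rw [ht, pow_succ, mul_assoc]⟩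
  exact ⟨(isUnit_of_not_p_dvd he).unit, rfl⟩

end WittVector

theorem stmt_7_general (p n : ℕ) [Fact p.Prime]
    (φ : MvPolynomial (Fin 2) (WittVector p (GaloisField p n)))
    (x₀ : WittVector p (GaloisField p n)) (k : ℕ)
    (hk : (p : WittVector p (GaloisField p n)) ^ k ∣
        MvPolynomial.eval ![x₀, WittVector.frobenius x₀] (MvPolynomial.pderiv 1 φ))
    (hk' : ¬ (p : WittVector p (GaloisField p n)) ^ (k + 1) ∣
        MvPolynomial.eval ![x₀, WittVector.frobenius x₀] (MvPolynomial.pderiv 1 φ))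
    (h0 : (p : WittVector p (GaloisField p n)) ^ (2 * k + 1) ∣
        MvPolynomial.eval ![x₀, WittVector.frobenius x₀] φ)
    (hY : (p : WittVector p (GaloisField p n)) ^ (k + 1) ∣
        MvPolynomial.eval ![x₀, WittVector.frobenius x₀] (MvPolynomial.pderiv 0 φ)) :
    ∀ N : ℕ, ∃ X : WittVector p (GaloisField p n),
      (p : WittVector p (GaloisField p n)) ^ (N + k) ∣
          MvPolynomial.eval ![X, WittVector.frobenius X] φ ∧
        (p : WittVector p (GaloisField p n)) ^ (k + 1) ∣ X - x₀ := by
  obtain ⟨e, hZ⟩ := WittVector.exists_eq_p_pow_mul_unit hk hk'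
  intro N
  obtain ⟨X, hX, hφ⟩ := exists_twisted_root_approx (WittVector.frobenius_bijective p _).surjective
    (map_natCast _ p) e hZ hY h0 N
  exact ⟨X, (pow_dvd_pow _ (by omega)).trans hφ, hX⟩

theorem stmt_7 (p n : ℕ) [Fact p.Prime] (hn : 0 < n)
    (φ : MvPolynomial (Fin 2) (WittVector p (GaloisField p n)))
    (x₀ : WittVector p (GaloisField p n)) (k : ℕ)
    (hk : (p : WittVector p (GaloisField p n)) ^ k ∣
        MvPolynomial.eval ![x₀, WittVector.frobenius x₀] (MvPolynomial.pderiv 1 φ))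
    (hk' : ¬ (p : WittVector p (GaloisField p n)) ^ (k + 1) ∣
        MvPolynomial.eval ![x₀, WittVector.frobenius x₀] (MvPolynomial.pderiv 1 φ))
    (h0 : (p : WittVector p (GaloisField p n)) ^ (2 * k + 1) ∣
        MvPolynomial.eval ![x₀, WittVector.frobenius x₀] φ)
    (hY : (p : WittVector p (GaloisField p n)) ^ (k + 1) ∣
        MvPolynomial.eval ![x₀, WittVector.frobenius x₀] (MvPolynomial.pderiv 0 φ)) :
    ∀ N : ℕ, ∃ X : WittVector p (GaloisField p n),
      (p : WittVector p (GaloisField p n)) ^ (N + k) ∣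
          MvPolynomial.eval ![X, WittVector.frobenius X] φ ∧
        (p : WittVector p (GaloisField p n)) ^ (k + 1) ∣ X - x₀ :=
  stmt_7_general p n φ x₀ k hk hk' h0 hY
end

section
/- Let 𝔽_q be a finite field and (a_i)_{i≥0} a sequence in 𝔽_q satisfying a linear recurrence of order n. Set g(X) = Σ_{i=0}^{2n−1} a_i X^{2n−1−i} and f(X) = X^{2n}. Then the minimal polynomial c(X) of the sequence (a_i) is, up to a unit, the cofactor of g of minimal degree in an extended-Euclidean relation c(X)g(X) + q(X)f(X) = r(X) with deg r ≤ n − 1. -/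
/-!
A sequence `a` defines the functional `φ(X ^ j) = a j` on `K[X]`, and the polynomials `p` with
`φ(q * p) = 0` for all `q` (i.e. whose recurrence `a` satisfies) form an ideal; a monic element of
minimal degree, the minimal polynomial `c`, divides all its elements. If `deg p ≤ n` and `t < n`,
the coefficient of `X ^ (2n - 1 - t)` in `p * g` is `φ(X ^ t * p)`, while `q * X ^ (2n)` has no
such coefficient and `r` none of degree `≥ n`. So a relation `p g + q X ^ (2n) = r`, `deg r < n`,
says exactly that `φ(X ^ t * p) = 0` for `t < n`. As `deg c ≤ n`, the sequence
`t ↦ φ(X ^ t * p)` satisfies the recurrence of `c` with vanishing initial values, so it vanishes: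
`p` lies in the ideal, hence is a multiple of `c`.
-/

open Polynomial

namespace Polynomial

theorem coeff_modByMonic_X_pow_of_lt {R : Type*} [Ring R] (h : R[X]) {k m : ℕ}
    (hm : m < k) : (h %ₘ X ^ k).coeff m = h.coeff m := by
  conv_rhs => rw [← modByMonic_add_div h (X ^ k)]
  rw [coeff_add, coeff_X_pow_mul', if_neg (not_le.2 hm), add_zero]

theorem dvd_of_mem_of_forall_monic_mem_degree_le {K : Type*} [Field K]
    {I : Ideal K[X]} {c p : K[X]} (hc : c.Monic) (hcI : c ∈ I)
    (hmin : ∀ q ∈ I, q.Monic → c.degree ≤ q.degree) (hp : p ∈ I) : c ∣ p := by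
  rw [← modByMonic_eq_zero_iff_dvd hc]
  by_contra hr
  have hrI : p %ₘ c ∈ I := by
    rw [modByMonic_eq_sub_mul_div p c]
    exact I.sub_mem hp (I.mul_mem_right _ hcI)
  have hle := hmin _ (I.mul_mem_right (C (p %ₘ c).leadingCoeff⁻¹) hrI)
    (monic_mul_leadingCoeff_inv hr)
  rw [degree_mul_leadingCoeff_inv _ hr] at hle
  exact (degree_modByMonic_lt p hc).not_ge hle

variable {K : Type*} [Field K]

def seqFunctional (a : ℕ → K) : K[X] →ₗ[K] K :=
  lsum fun j => LinearMap.smulRight LinearMap.id (a j)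

theorem seqFunctional_monomial (a : ℕ → K) (j : ℕ) (r : K) :
    seqFunctional a (monomial j r) = r * a j := by
  simp [seqFunctional]

theorem seqFunctional_X_pow (a : ℕ → K) (j : ℕ) : seqFunctional a (X ^ j) = a j := by
  rw [← monomial_one_right_eq_X_pow, seqFunctional_monomial, one_mul]

theorem seqFunctional_eq_sum (a : ℕ → K) {p : K[X]} {N : ℕ} (hp : p.natDegree < N) :
    seqFunctional a p = ∑ j ∈ Finset.range N, p.coeff j * a j :=
  sum_over_range' p (f := fun j r => r * a j) (fun _ => zero_mul _) N hp

theorem seqFunctional_mul (a : ℕ → K) (q p : K[X]) :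
    seqFunctional a (q * p) = seqFunctional (fun j => seqFunctional a (X ^ j * p)) q := by
  have : (seqFunctional a).comp (LinearMap.mulRight K p) =
      seqFunctional (fun j => seqFunctional a (X ^ j * p)) := by
    ext j
    simp only [LinearMap.comp_apply, LinearMap.mulRight_apply, ← X_pow_eq_monomial,
      seqFunctional_X_pow]
  exact LinearMap.congr_fun this q

theorem seqFunctional_X_pow_mul (a : ℕ → K) (i : ℕ) (p : K[X]) :
    seqFunctional a (X ^ i * p) = seqFunctional (fun j => a (i + j)) p := by
  rw [mul_comm, seqFunctional_mul]
  simp_rw [← pow_add, seqFunctional_X_pow, add_comm]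

def seqAnnihilator (a : ℕ → K) : Ideal K[X] where
  carrier := {p | ∀ q, seqFunctional a (q * p) = 0}
  add_mem' {p p'} hp hp' q := by simp only [mul_add, map_add, hp q, hp' q, add_zero]
  zero_mem' q := by simp
  smul_mem' s p hp q := by simpa only [smul_eq_mul, ← mul_assoc] using hp (q * s)

theorem mem_seqAnnihilator_iff_X_pow {a : ℕ → K} {p : K[X]} :
    p ∈ seqAnnihilator a ↔ ∀ i, seqFunctional a (X ^ i * p) = 0 := by
  refine ⟨fun hp i => hp (X ^ i), fun hp q => ?_⟩
  rw [seqFunctional_mul, seqFunctional_eq_sum _ (Nat.lt_succ_self q.natDegree)]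
  simp [hp]

theorem mem_seqAnnihilator_iff {a : ℕ → K} {p : K[X]} :
    p ∈ seqAnnihilator a ↔
      ∀ i, ∑ j ∈ Finset.range (p.natDegree + 1), p.coeff j * a (i + j) = 0 := by
  simp only [mem_seqAnnihilator_iff_X_pow, seqFunctional_X_pow_mul,
    seqFunctional_eq_sum _ (Nat.lt_succ_self p.natDegree)]

theorem eq_zero_of_monic_mem_seqAnnihilator {b : ℕ → K} {c : K[X]} (hc : c.Monic)
    (hcb : c ∈ seqAnnihilator b) (hinit : ∀ t < c.natDegree, b t = 0) : b = 0 := by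
  rw [mem_seqAnnihilator_iff] at hcb
  funext t
  induction t using Nat.strong_induction_on with
  | _ t ih =>
    obtain ht | ht := lt_or_ge t c.natDegree
    · exact hinit t ht
    · have hrec := hcb (t - c.natDegree)
      rwa [Finset.sum_range_succ, hc.coeff_natDegree, one_mul, Nat.sub_add_cancel ht,
        Finset.sum_eq_zero fun j hj => ?_, zero_add] at hrec
      rw [ih _ (by rw [Finset.mem_range] at hj; omega), Pi.zero_apply, mul_zero]

theorem mem_seqAnnihilator_of_forall_lt_natDegree {a : ℕ → K} {c p : K[X]} (hc : c.Monic)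
    (hca : c ∈ seqAnnihilator a) (hp : ∀ t < c.natDegree, seqFunctional a (X ^ t * p) = 0) :
    p ∈ seqAnnihilator a := by
  have hcb : c ∈ seqAnnihilator fun t => seqFunctional a (X ^ t * p) :=
    mem_seqAnnihilator_iff_X_pow.2 fun i => by
      rw [← seqFunctional_mul, mul_right_comm]
      exact hca _
  exact mem_seqAnnihilator_iff_X_pow.2 (congrFun (eq_zero_of_monic_mem_seqAnnihilator hc hcb hp))

noncomputable def revGenPoly (a : ℕ → K) (N : ℕ) : K[X] :=
  ∑ i ∈ Finset.range N, C (a i) * X ^ (N - 1 - i)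

theorem coeff_revGenPoly (a : ℕ → K) (N m : ℕ) :
    (revGenPoly a N).coeff m = if m < N then a (N - 1 - m) else 0 := by
  simp only [revGenPoly, finsetSum_coeff, coeff_C_mul_X_pow]
  split_ifs with hm
  · rw [Finset.sum_eq_single (N - 1 - m) (fun i hi hne => if_neg (by rw [Finset.mem_range] at hi; omega))
      (fun h => by rw [Finset.mem_range] at h; omega), if_pos (by omega)]
  · exact Finset.sum_eq_zero fun i hi => if_neg (by rw [Finset.mem_range] at hi; omega)

theorem coeff_mul_revGenPoly (a : ℕ → K) {p : K[X]} {m N : ℕ} (hm : m < N)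
    (hp : p.natDegree ≤ m) :
    (p * revGenPoly a N).coeff m = seqFunctional a (X ^ (N - 1 - m) * p) := by
  rw [coeff_mul, Finset.Nat.sum_antidiagonal_eq_sum_range_succ_mk,
    seqFunctional_X_pow_mul, seqFunctional_eq_sum _ (Nat.lt_succ_of_le hp)]
  refine Finset.sum_congr rfl fun k hk => ?_
  rw [coeff_revGenPoly, if_pos (by omega)]
  rw [Finset.mem_range] at hk
  congr 2
  omega

theorem exists_mul_revGenPoly_add_mul_X_pow_iff {a : ℕ → K} {n : ℕ} {p : K[X]}
    (hp : p.natDegree ≤ n) :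
    (∃ q r : K[X], p * revGenPoly a (2 * n) + q * X ^ (2 * n) = r ∧ r.degree < n) ↔
      ∀ t < n, seqFunctional a (X ^ t * p) = 0 := by
  constructor
  · rintro ⟨q, r, rfl, hr⟩ t ht
    have hcoeff := coeff_eq_zero_of_degree_lt (n := 2 * n - 1 - t)
      (hr.trans_le (by exact_mod_cast (by omega : n ≤ 2 * n - 1 - t)))
    rwa [coeff_add, coeff_mul_X_pow', if_neg (by omega), add_zero,
      coeff_mul_revGenPoly a (by omega) (by omega), show 2 * n - 1 - (2 * n - 1 - t) = t by omega]
      at hcoeff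
  · intro hp0
    set h := p * revGenPoly a (2 * n)
    refine ⟨-(h /ₘ X ^ (2 * n)), h %ₘ X ^ (2 * n),
      by linear_combination -modByMonic_add_div h (X ^ (2 * n)), ?_⟩
    rw [degree_lt_iff_coeff_zero]
    intro m hm
    obtain hm2 | hm2 := lt_or_ge m (2 * n)
    · rw [coeff_modByMonic_X_pow_of_lt _ hm2, coeff_mul_revGenPoly a hm2 (by omega)]
      exact hp0 _ (by omega)
    · refine coeff_eq_zero_of_degree_lt ((degree_modByMonic_lt _ (monic_X_pow _)).trans_le ?_)
      rw [degree_X_pow]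
      exact_mod_cast hm2

end Polynomial

theorem stmt_16_general (K : Type*) [Field K] (n : ℕ)
    (a : ℕ → K)
    (c : Polynomial K) (hcmonic : c.Monic) (hcdeg : c.natDegree ≤ n)
    (hann : ∀ i : ℕ, ∑ j ∈ Finset.range (c.natDegree + 1), c.coeff j * a (i + j) = 0)
    (hmin : ∀ c' : Polynomial K, c'.Monic →
      (∀ i : ℕ, ∑ j ∈ Finset.range (c'.natDegree + 1), c'.coeff j * a (i + j) = 0) →
      c.degree ≤ c'.degree)
    (g f : Polynomial K)
    (hg : g = ∑ i ∈ Finset.range (2 * n), C (a i) * X ^ (2 * n - 1 - i))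
    (hf : f = X ^ (2 * n)) :
    (∃ q r : Polynomial K, c * g + q * f = r ∧ r.degree < n) ∧
      (∀ c' q' r' : Polynomial K, c' ≠ 0 → c' * g + q' * f = r' → r'.degree < n →
        c.degree ≤ c'.degree) ∧
      (∀ c' q' r' : Polynomial K, c' ≠ 0 → c' * g + q' * f = r' → r'.degree < n →
        c'.degree ≤ c.degree → ∃ u : K, u ≠ 0 ∧ c' = C u * c) := by
  obtain rfl : g = revGenPoly a (2 * n) := hg
  subst hf
  rw [← mem_seqAnnihilator_iff] at hann
  simp_rw [← mem_seqAnnihilator_iff] at hmin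
  have hdvd (p : K[X]) : p ∈ seqAnnihilator a → c ∣ p :=
    dvd_of_mem_of_forall_monic_mem_degree_le hcmonic hann fun q hq hqm => hmin q hqm hq
  have hmem (c' q' r' : K[X]) (hrel : c' * revGenPoly a (2 * n) + q' * X ^ (2 * n) = r')
      (hr : r'.degree < n) (hc' : c'.natDegree ≤ n) : c' ∈ seqAnnihilator a :=
    mem_seqAnnihilator_of_forall_lt_natDegree hcmonic hann fun t ht =>
      (exists_mul_revGenPoly_add_mul_X_pow_iff hc').1 ⟨q', r', hrel, hr⟩ t (ht.trans_le hcdeg)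
  refine ⟨(exists_mul_revGenPoly_add_mul_X_pow_iff hcdeg).2 fun t _ =>
    mem_seqAnnihilator_iff_X_pow.1 hann t, fun c' q' r' hc' hrel hr => ?_,
    fun c' q' r' hc' hrel hr hle => ?_⟩
  · by_cases hdeg : c'.natDegree ≤ n
    · exact degree_le_of_dvd (hdvd c' (hmem c' q' r' hrel hr hdeg)) hc'
    · calc c.degree ≤ n := degree_le_of_natDegree_le hcdeg
        _ ≤ c'.degree := by
          rw [degree_eq_natDegree hc']
          exact_mod_cast (not_le.1 hdeg).le
  · have hdeg := natDegree_le_natDegree hle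
    refine ⟨c'.leadingCoeff, leadingCoeff_ne_zero.2 hc',
      eq_leadingCoeff_mul_of_monic_of_dvd_of_natDegree_le hcmonic ?_ hdeg⟩
    exact hdvd c' (hmem c' q' r' hrel hr (hdeg.trans hcdeg))

theorem stmt_16 (K : Type*) [Field K] [Fintype K] (n : ℕ) (hn : 0 < n)
    (a : ℕ → K)
    (c : Polynomial K) (hcmonic : c.Monic) (hcdeg : c.natDegree ≤ n)
    (hann : ∀ i : ℕ, ∑ j ∈ Finset.range (c.natDegree + 1), c.coeff j * a (i + j) = 0)
    (hmin : ∀ c' : Polynomial K, c'.Monic →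
      (∀ i : ℕ, ∑ j ∈ Finset.range (c'.natDegree + 1), c'.coeff j * a (i + j) = 0) →
      c.degree ≤ c'.degree)
    (g f : Polynomial K)
    (hg : g = ∑ i ∈ Finset.range (2 * n), C (a i) * X ^ (2 * n - 1 - i))
    (hf : f = X ^ (2 * n)) :
    (∃ q r : Polynomial K, c * g + q * f = r ∧ r.degree < n) ∧
      (∀ c' q' r' : Polynomial K, c' ≠ 0 → c' * g + q' * f = r' → r'.degree < n →
        c.degree ≤ c'.degree) ∧
      (∀ c' q' r' : Polynomial K, c' ≠ 0 → c' * g + q' * f = r' → r'.degree < n →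
        c'.degree ≤ c.degree → ∃ u : K, u ≠ 0 ∧ c' = C u * c) :=
  stmt_16_general K n a c hcmonic hcdeg hann hmin g f hg hf
end
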